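/- arXiv:2004.11025 — 9 statements merged into one kernel-verified Lean document; each statement's English description precedes it below -/
import Mathlib

section
/- Let X and Y be Banach spaces over 𝕂 (= ℝ or ℂ) and let T : X → Y be a bounded linear operator which is a monomorphism, i.e., there exists a constant C > 0 such that ‖Tx‖ ≥ C‖x‖ for all x ∈ X. If T quasi attains its norm, then T attains its norm: there exists x₀ ∈ X with ‖x₀‖ = 1 and ‖T x₀‖ = ‖T‖. -/
/-- If a bounded linear monomorphism `T` (i.e. `‖T x‖ ≥ C ‖x‖` for some `C > 0`)
between Banach spaces quasi attains its norm, then it attains its norm. -/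
theorem monomorphism_quasi_attains_implies_attains {𝕜 X Y : Type*} [RCLike 𝕜]
    [NormedAddCommGroup X] [NormedSpace 𝕜 X] [CompleteSpace X] [Nontrivial X]
    [NormedAddCommGroup Y] [NormedSpace 𝕜 Y] [CompleteSpace Y]
    (T : X →L[𝕜] Y) (C : ℝ) (hC : 0 < C) (hmono : ∀ x : X, C * ‖x‖ ≤ ‖T x‖)
    (hQNA : ∃ u ∈ closure (⇑T '' Metric.closedBall 0 1), ‖u‖ = ‖T‖) :
    ∃ x₀ : X, ‖x₀‖ = 1 ∧ ‖T x₀‖ = ‖T‖ := by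
  obtain ⟨u, hu, hnorm⟩ := hQNA
  have hanti : AntilipschitzWith (C⁻¹).toNNReal T := by
    apply T.antilipschitz_of_bound
    intro x
    rw [Real.coe_toNNReal _ (le_of_lt (inv_pos.2 hC))]
    rw [le_inv_mul_iff₀ hC]
    exact hmono x
  have hemb := hanti.isClosedEmbedding T.uniformContinuous
  have hclosed : IsClosed (⇑T '' Metric.closedBall (0 : X) 1) :=
    hemb.isClosedMap _ Metric.isClosed_closedBall
  rw [hclosed.closure_eq] at hu
  obtain ⟨x, hx, rfl⟩ := hu
  have hx1 : ‖x‖ ≤ 1 := by simpa using hx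
  -- ‖T‖ > 0
  obtain ⟨z, hz⟩ := exists_ne (0 : X)
  have hCT : C ≤ ‖T‖ := by
    have h1 := hmono z
    have h2 := T.le_opNorm z
    have hz' : 0 < ‖z‖ := norm_pos_iff.2 hz
    nlinarith
  have hT0 : 0 < ‖T‖ := lt_of_lt_of_le hC hCT
  have hx0 : x ≠ 0 := by
    intro h
    rw [h] at hnorm
    simp at hnorm
    exact hT0.ne' hnorm.symm
  have hxn : 0 < ‖x‖ := norm_pos_iff.2 hx0
  refine ⟨(‖x‖⁻¹ : 𝕜) • x, ?_, ?_⟩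
  · rw [norm_smul]
    simp [hxn.ne']
  · have h1 : ‖T ((‖x‖⁻¹ : 𝕜) • x)‖ = ‖x‖⁻¹ * ‖T x‖ := by
      rw [map_smul, norm_smul]
      simp
    rw [h1, hnorm]
    have hle : ‖T‖ ≤ ‖x‖⁻¹ * ‖T‖ := by
      nth_rewrite 1 [← one_mul ‖T‖]
      gcongr
      exact (le_inv_comm₀ hxn one_pos).1 (by simpa using hx1)
    have hge : ‖x‖⁻¹ * ‖T‖ ≤ ‖T‖ := by
      have := T.le_opNorm ((‖x‖⁻¹ : 𝕜) • x)
      rw [h1, hnorm] at this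
      calc ‖x‖⁻¹ * ‖T‖ ≤ ‖T‖ * ‖(‖x‖⁻¹ : 𝕜) • x‖ := this
        _ ≤ ‖T‖ * 1 := by gcongr; rw [norm_smul]; simp [hxn.ne']
        _ = ‖T‖ := mul_one _
    linarith
end

section
/- Let X and Y be Banach spaces over 𝕂 (= ℝ or ℂ) and let T : X → Y be a bounded linear monomorphism (there is C > 0 with ‖Tx‖ ≥ C‖x‖ for all x). If T does not belong to the closure (in the operator norm of L(X,Y)) of the set NA(X,Y) of norm attaining operators, then T does not belong to the closure of the set QNA(X,Y) of quasi norm attaining operators. -/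
/-!
Operators close to a monomorphism are monomorphisms, and a monomorphism on a Banach space is
an isomorphism onto its image, so it maps the closed unit ball onto a closed set. Near `T`,
quasi norm attaining operators therefore attain their norm.
-/

open Metric

namespace ContinuousLinearMap

variable {𝕜 X Y : Type*} [RCLike 𝕜] [NormedAddCommGroup X] [NormedSpace 𝕜 X]
  [NormedAddCommGroup Y] [NormedSpace 𝕜 Y]

theorem mul_norm_le_norm_apply_of_norm_sub_le {T S : X →L[𝕜] Y} {C δ : ℝ}
    (hT : ∀ x, C * ‖x‖ ≤ ‖T x‖) (hTS : ‖T - S‖ ≤ δ) (x : X) : (C - δ) * ‖x‖ ≤ ‖S x‖ :=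
  calc (C - δ) * ‖x‖ ≤ ‖T x‖ - ‖T x - S x‖ := by
        have hle : ‖(T - S) x‖ ≤ δ * ‖x‖ :=
          ((T - S).le_opNorm x).trans (mul_le_mul_of_nonneg_right hTS (norm_nonneg x))
        rw [sub_apply] at hle
        linarith [hT x]
    _ ≤ ‖S x‖ := by simpa only [sub_sub_cancel] using norm_sub_norm_le (T x) (T x - S x)

theorem isClosed_image_of_mul_norm_le [CompleteSpace X] (S : X →L[𝕜] Y) {c : ℝ} (hc : 0 < c)
    (hS : ∀ x, c * ‖x‖ ≤ ‖S x‖) {s : Set X} (hs : IsClosed s) : IsClosed (S '' s) := by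
  obtain ⟨K, hK⟩ := antilipschitzWith_iff_exists_mul_le_norm.2 ⟨c, hc, hS⟩
  exact (hK.isClosedEmbedding S.uniformContinuous).isClosedMap s hs

theorem exists_norm_eq_one_of_norm_apply_eq_opNorm [Nontrivial X] {S : X →L[𝕜] Y} {x : X}
    (hx : ‖x‖ ≤ 1) (hSx : ‖S x‖ = ‖S‖) : ∃ x₀ : X, ‖x₀‖ = 1 ∧ ‖S x₀‖ = ‖S‖ := by
  rcases (norm_nonneg S).eq_or_lt with hS | hS
  · obtain ⟨z, hz⟩ := exists_ne (0 : X)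
    refine ⟨(‖z‖⁻¹ : 𝕜) • z, norm_smul_inv_norm hz, ?_⟩
    have hle := S.le_opNorm ((‖z‖⁻¹ : 𝕜) • z)
    rw [← hS, zero_mul] at hle
    exact le_antisymm (hS ▸ hle) (hS ▸ norm_nonneg _)
  · exact ⟨x, le_antisymm hx ((le_mul_iff_one_le_right hS).1 (hSx ▸ S.le_opNorm x)), hSx⟩

theorem exists_norm_eq_one_of_mem_closure_image_closedBall [CompleteSpace X] [Nontrivial X]
    {S : X →L[𝕜] Y} {c : ℝ} (hc : 0 < c) (hS : ∀ x, c * ‖x‖ ≤ ‖S x‖) {u : Y}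
    (hu : u ∈ closure (S '' closedBall 0 1)) (hnorm : ‖u‖ = ‖S‖) :
    ∃ x₀ : X, ‖x₀‖ = 1 ∧ ‖S x₀‖ = ‖S‖ := by
  rw [(S.isClosed_image_of_mul_norm_le hc hS isClosed_closedBall).closure_eq] at hu
  obtain ⟨x, hx, rfl⟩ := hu
  exact exists_norm_eq_one_of_norm_apply_eq_opNorm (by simpa using hx) hnorm

end ContinuousLinearMap

theorem monomorphism_not_in_closure_NA_implies_not_in_closure_QNA_general {𝕜 X Y : Type*} [RCLike 𝕜]
    [NormedAddCommGroup X] [NormedSpace 𝕜 X] [CompleteSpace X] [Nontrivial X]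
    [NormedAddCommGroup Y] [NormedSpace 𝕜 Y]
    (T : X →L[𝕜] Y) (C : ℝ) (hC : 0 < C) (hmono : ∀ x : X, C * ‖x‖ ≤ ‖T x‖)
    (hNA : T ∉ closure {S : X →L[𝕜] Y | ∃ x₀ : X, ‖x₀‖ = 1 ∧ ‖S x₀‖ = ‖S‖}) :
    T ∉ closure {S : X →L[𝕜] Y | ∃ u ∈ closure (⇑S '' Metric.closedBall 0 1), ‖u‖ = ‖S‖} := by
  intro hQNA
  rw [Metric.mem_closure_iff] at hNA hQNA
  push Not at hNA
  obtain ⟨ε, hε, hfar⟩ := hNA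
  obtain ⟨S, ⟨u, hu, hnorm⟩, hTS⟩ := hQNA (min ε (C / 2)) (by positivity)
  have hSmono : ∀ x, (C - C / 2) * ‖x‖ ≤ ‖S x‖ :=
    ContinuousLinearMap.mul_norm_le_norm_apply_of_norm_sub_le hmono
      (by rw [← dist_eq_norm]; exact hTS.le.trans (min_le_right _ _))
  have hSNA := S.exists_norm_eq_one_of_mem_closure_image_closedBall (by linarith) hSmono hu hnorm
  exact (hfar S hSNA).not_gt (hTS.trans_le (min_le_left _ _))

/-- If a bounded linear monomorphism `T` between Banach spaces does not belong to
the operator-norm closure of the set of norm attaining operators, then it does not belong to the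
closure of the set of quasi norm attaining operators. -/
theorem monomorphism_not_in_closure_NA_implies_not_in_closure_QNA {𝕜 X Y : Type*} [RCLike 𝕜]
    [NormedAddCommGroup X] [NormedSpace 𝕜 X] [CompleteSpace X] [Nontrivial X]
    [NormedAddCommGroup Y] [NormedSpace 𝕜 Y] [CompleteSpace Y]
    (T : X →L[𝕜] Y) (C : ℝ) (hC : 0 < C) (hmono : ∀ x : X, C * ‖x‖ ≤ ‖T x‖)
    (hNA : T ∉ closure {S : X →L[𝕜] Y | ∃ x₀ : X, ‖x₀‖ = 1 ∧ ‖S x₀‖ = ‖S‖}) :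
    T ∉ closure {S : X →L[𝕜] Y | ∃ u ∈ closure (⇑S '' Metric.closedBall 0 1), ‖u‖ = ‖S‖} :=
  monomorphism_not_in_closure_NA_implies_not_in_closure_QNA_general T C hC hmono hNA
end

section
/- Let X be a closed linear subspace of c₀ (the Banach space of scalar sequences converging to 0 with the supremum norm), and let Y be a strictly convex Banach space over the same scalar field. Then every norm attaining bounded linear operator T : X → Y has finite rank, i.e., if there is x₀ ∈ X with ‖x₀‖ = 1 and ‖T x₀‖ = ‖T‖, then the range of T is finite dimensional. -/
/-!
Since `x₀ ∈ c₀`, its coordinates beyond some `N` are at most `1/2`, so `x₀ ± x` stays in the unit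
ball whenever `x` vanishes on the first `N` coordinates and `‖x‖ ≤ 1/2`. Then `T (x₀ + x)` and
`T (x₀ - x)` lie in the ball of radius `‖T‖` while their midpoint `T x₀` has norm `‖T‖`, so strict
convexity makes them equal, i.e. `T x = 0`. By scaling, `T` vanishes on the common kernel of the
first `N` coordinate functionals, a subspace of finite codimension, so `T` has finite rank.
-/

open BoundedContinuousFunction Filter Topology

theorem eq_of_norm_le_of_norm_add_eq_two_mul (𝕜 : Type*) {Y : Type*} [RCLike 𝕜]
    [NormedAddCommGroup Y] [NormedSpace 𝕜 Y]
    (hY : ∀ y₁ y₂ : Y, ‖y₁‖ ≤ 1 → ‖y₂‖ ≤ 1 → y₁ ≠ y₂ → ‖y₁ + y₂‖ < 2)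
    {a b : Y} {r : ℝ} (ha : ‖a‖ ≤ r) (hb : ‖b‖ ≤ r) (hab : ‖a + b‖ = 2 * r) : a = b := by
  rcases (norm_nonneg a).trans ha |>.eq_or_lt with rfl | hr
  · rw [norm_le_zero_iff.mp ha, norm_le_zero_iff.mp hb]
  set c : 𝕜 := ((r⁻¹ : ℝ) : 𝕜)
  have hc : ‖c‖ = r⁻¹ := by simp [c, hr.le]
  have hc₀ : c ≠ 0 := by simp [c, hr.ne']
  have hca : ‖c • a‖ ≤ 1 := by rw [norm_smul, hc]; exact inv_mul_le_one_of_le₀ ha hr.le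
  have hcb : ‖c • b‖ ≤ 1 := by rw [norm_smul, hc]; exact inv_mul_le_one_of_le₀ hb hr.le
  have hcab : ‖c • a + c • b‖ = 2 := by rw [← smul_add, norm_smul, hc, hab]; field_simp
  by_contra hne
  have := hY _ _ hca hcb (fun h => hne (smul_right_injective Y hc₀ h))
  exact this.ne hcab

theorem ContinuousLinearMap.map_eq_zero_of_norm_add_le_one_of_norm_sub_le_one
    {𝕜 E Y : Type*} [RCLike 𝕜] [SeminormedAddCommGroup E] [NormedSpace 𝕜 E]
    [NormedAddCommGroup Y] [NormedSpace 𝕜 Y]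
    (hY : ∀ y₁ y₂ : Y, ‖y₁‖ ≤ 1 → ‖y₂‖ ≤ 1 → y₁ ≠ y₂ → ‖y₁ + y₂‖ < 2)
    (T : E →L[𝕜] Y) {x₀ x : E} (hTx₀ : ‖T x₀‖ = ‖T‖)
    (hadd : ‖x₀ + x‖ ≤ 1) (hsub : ‖x₀ - x‖ ≤ 1) : T x = 0 := by
  have hle : ∀ z : E, ‖z‖ ≤ 1 → ‖T z‖ ≤ ‖T‖ := fun z hz =>
    (T.le_opNorm z).trans (mul_le_of_le_one_right (norm_nonneg T) hz)
  have hsum : ‖T (x₀ + x) + T (x₀ - x)‖ = 2 * ‖T‖ := by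
    rw [← map_add, add_add_sub_cancel, ← two_smul 𝕜, map_smul, norm_smul, hTx₀]
    simp
  have heq := eq_of_norm_le_of_norm_add_eq_two_mul 𝕜 hY (hle _ hadd) (hle _ hsub) hsum
  rw [map_add, map_sub, sub_eq_add_neg, add_right_inj, eq_neg_iff_add_eq_zero, ← two_smul 𝕜,
    smul_eq_zero] at heq
  exact heq.resolve_left two_ne_zero

theorem BoundedContinuousFunction.exists_norm_add_le_one_of_tendsto_zero {E : Type*}
    [SeminormedAddCommGroup E] (f : ℕ →ᵇ E) (hf : ‖f‖ ≤ 1) (hf₀ : Tendsto f atTop (𝓝 0)) :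
    ∃ N, ∀ g : ℕ →ᵇ E, (∀ i < N, g i = 0) → ‖g‖ ≤ 1 / 2 → ‖f + g‖ ≤ 1 := by
  obtain ⟨N, hN⟩ := Metric.tendsto_atTop.mp hf₀ (1 / 2) (by norm_num)
  refine ⟨N, fun g hg hg' => (norm_le zero_le_one).mpr fun i => ?_⟩
  rw [add_apply]
  rcases lt_or_ge i N with hi | hi
  · rw [hg i hi, add_zero]; exact (norm_coe_le_norm f i).trans hf
  · calc ‖f i + g i‖ ≤ ‖f i‖ + ‖g i‖ := norm_add_le _ _
      _ ≤ 1 / 2 + 1 / 2 := by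
        gcongr
        · simpa using (hN i hi).le
        · exact (norm_coe_le_norm g i).trans hg'
      _ = 1 := by norm_num

theorem LinearMap.map_eq_zero_of_forall_norm_le {𝕜 E F : Type*} [RCLike 𝕜]
    [SeminormedAddCommGroup E] [NormedSpace 𝕜 E] [AddCommGroup F] [Module 𝕜 F]
    (f : E →ₗ[𝕜] F) (p : Submodule 𝕜 E) {δ : ℝ} (hδ : 0 < δ)
    (h : ∀ x ∈ p, ‖x‖ ≤ δ → f x = 0) : p ≤ ker f := by
  intro x hx
  rcases (norm_nonneg x).eq_or_lt with hx₀ | hx₀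
  · exact h x hx (hx₀ ▸ hδ.le)
  set c : 𝕜 := ((δ / ‖x‖ : ℝ) : 𝕜)
  have hc : ‖c‖ = δ / ‖x‖ := by simp [c, abs_of_pos hδ]
  have hcx : f (c • x) = 0 :=
    h _ (p.smul_mem c hx) (by rw [norm_smul, hc, div_mul_cancel₀ _ hx₀.ne'])
  rw [map_smul, smul_eq_zero] at hcx
  exact hcx.resolve_left (by simp [c, hδ.ne', hx₀.ne'])

theorem LinearMap.finiteDimensional_range_of_ker_le {K V W U : Type*} [DivisionRing K]
    [AddCommGroup V] [Module K V] [AddCommGroup W] [Module K W] [FiniteDimensional K W]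
    [AddCommGroup U] [Module K U] (π : V →ₗ[K] W) (T : V →ₗ[K] U) (h : ker π ≤ ker T) :
    FiniteDimensional K (range T) := by
  have : FiniteDimensional K (V ⧸ ker π) := π.quotKerEquivRange.symm.finiteDimensional
  rw [← Submodule.range_liftQ _ T h]
  infer_instance

theorem norm_attaining_from_subspace_c0_to_strictly_convex_finite_rank_general
    {𝕜 Y : Type*} [RCLike 𝕜]
    [NormedAddCommGroup Y] [NormedSpace 𝕜 Y]
    (hY : ∀ y₁ y₂ : Y, ‖y₁‖ ≤ 1 → ‖y₂‖ ≤ 1 → y₁ ≠ y₂ → ‖y₁ + y₂‖ < 2)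
    (X : Submodule 𝕜 (ℕ →ᵇ 𝕜))
    (hXc₀ : ∀ f ∈ X, Filter.Tendsto (⇑f) Filter.atTop (nhds (0 : 𝕜)))
    (T : ↥X →L[𝕜] Y) (x₀ : ↥X) (hx₀ : ‖x₀‖ = 1) (hTx₀ : ‖T x₀‖ = ‖T‖) :
    FiniteDimensional 𝕜 (LinearMap.range (T : ↥X →ₗ[𝕜] Y)) := by
  obtain ⟨N, hN⟩ :=
    exists_norm_add_le_one_of_tendsto_zero (x₀ : ℕ →ᵇ 𝕜) hx₀.le (hXc₀ _ x₀.2)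
  let π : ↥X →ₗ[𝕜] Fin N → 𝕜 :=
    (LinearMap.pi fun i : Fin N => (evalCLM (α := ℕ) (β := 𝕜) 𝕜 i).toLinearMap).comp X.subtype
  have hπ : ∀ x ∈ LinearMap.ker π, ∀ i < N, (x : ℕ →ᵇ 𝕜) i = 0 := fun x hx i hi =>
    congrFun (LinearMap.mem_ker.mp hx) ⟨i, hi⟩
  refine LinearMap.finiteDimensional_range_of_ker_le π _ <|
    LinearMap.map_eq_zero_of_forall_norm_le _ _ one_half_pos fun x hx hx' => ?_
  refine T.map_eq_zero_of_norm_add_le_one_of_norm_sub_le_one hY hTx₀ (hN x (hπ x hx) hx') ?_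
  rw [sub_eq_add_neg]
  exact hN (-x) (fun i hi => by simp [hπ x hx i hi]) (by rwa [norm_neg])

/-- If `X` is a closed subspace of `c₀` (realized as a closed submodule of
`ℓ∞ = ℕ →ᵇ 𝕜` all of whose elements converge to `0`, i.e. lie in `c₀`) and `Y` is a strictly
convex Banach space, then every norm attaining bounded linear operator `T : X → Y` has finite
rank. -/
theorem norm_attaining_from_subspace_c0_to_strictly_convex_finite_rank
    {𝕜 Y : Type*} [RCLike 𝕜]
    [NormedAddCommGroup Y] [NormedSpace 𝕜 Y] [CompleteSpace Y]
    (hY : ∀ y₁ y₂ : Y, ‖y₁‖ ≤ 1 → ‖y₂‖ ≤ 1 → y₁ ≠ y₂ → ‖y₁ + y₂‖ < 2)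
    (X : Submodule 𝕜 (ℕ →ᵇ 𝕜)) (hXclosed : IsClosed (X : Set (ℕ →ᵇ 𝕜)))
    (hXc₀ : ∀ f ∈ X, Filter.Tendsto (⇑f) Filter.atTop (nhds (0 : 𝕜)))
    (T : ↥X →L[𝕜] Y) (x₀ : ↥X) (hx₀ : ‖x₀‖ = 1) (hTx₀ : ‖T x₀‖ = ‖T‖) :
    FiniteDimensional 𝕜 (LinearMap.range (T : ↥X →ₗ[𝕜] Y)) :=
  norm_attaining_from_subspace_c0_to_strictly_convex_finite_rank_general hY X hXc₀ T x₀ hx₀ hTx₀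
end

section
/- Let X and Y be Banach spaces over 𝕂 (= ℝ or ℂ), let T : X → Y be a bounded linear operator with ‖T‖ ≠ 0, let ε > 0, and write D for the norm closure of T(B_X). Suppose there exist a continuous linear functional y₀* ∈ Y* with ‖y₀*‖ < ε/‖T‖ and a point y₀ ∈ D, y₀ ≠ 0, such that the function φ(y) := ‖y‖ + Re y₀*(y) strongly exposes D at y₀, i.e., φ(y) ≤ φ(y₀) for all y ∈ D and every sequence (y_n) in D with φ(y_n) → φ(y₀) converges in norm to y₀. Define S : X → Y by S x := T x + y₀*(Tx)·(y₀/‖y₀‖), and set z₀ := (1 + y₀*(y₀)/‖y₀‖)·y₀. Then: (i) ‖S − T‖ < ε; (ii) ‖S‖ = ‖y₀‖ + Re y₀*(y₀) = ‖z₀‖ and z₀ belongs to the norm closure of S(B_X), so S quasi attains its norm toward z₀; and (iii) for every sequence (x_n) in B_X with ‖S x_n‖ → ‖S‖ there exist scalars θ_n ∈ 𝕂 with |θ_n| = 1 such that S(θ_n x_n) → z₀ in norm. -/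
open Filter

lemma exists_unimodular_mul {𝕜 : Type*} [RCLike 𝕜] (a : 𝕜) :
    ∃ θ : 𝕜, ‖θ‖ = 1 ∧ θ * a = (‖a‖ : 𝕜) := by
  rcases eq_or_ne a 0 with h | h
  · exact ⟨1, by simp [h], by simp [h]⟩
  · have ha : (0:ℝ) < ‖a‖ := norm_pos_iff.mpr h
    refine ⟨(starRingEnd 𝕜) a * ((‖a‖ : 𝕜))⁻¹, ?_, ?_⟩
    · rw [norm_mul, norm_inv, RCLike.norm_conj, RCLike.norm_ofReal, abs_of_pos ha,
        mul_inv_cancel₀ (ne_of_gt ha)]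
    · rw [mul_comm, ← mul_assoc, mul_comm a, RCLike.conj_mul]
      rw [show ((‖a‖:ℝ):𝕜)^2 = ((‖a‖:ℝ):𝕜) * ((‖a‖:ℝ):𝕜) by ring]
      rw [mul_comm, ← mul_assoc, inv_mul_cancel₀ (by exact_mod_cast ne_of_gt ha), one_mul]

/-- the main perturbation construction.  If `‖·‖ + Re y₀*` strongly exposes
`D = closure (T '' B_X)` at `y₀ ≠ 0`, with `‖y₀*‖ < ε / ‖T‖`, then the operator
`S x = T x + y₀*(T x) • (y₀ / ‖y₀‖)` satisfies `‖S - T‖ < ε`, quasi attains its norm toward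
`z₀ = (1 + y₀*(y₀)/‖y₀‖) • y₀` with `‖S‖ = ‖y₀‖ + Re y₀*(y₀) = ‖z₀‖`, and every sequence
`(x_n) ⊆ B_X` with `‖S x_n‖ → ‖S‖` admits unimodular scalars `θ_n` with `S (θ_n • x_n) → z₀`. -/
theorem strongly_exposing_perturbation {𝕜 X Y : Type*} [RCLike 𝕜]
    [NormedAddCommGroup X] [NormedSpace 𝕜 X] [CompleteSpace X]
    [NormedAddCommGroup Y] [NormedSpace 𝕜 Y] [CompleteSpace Y]
    (T : X →L[𝕜] Y) (hT : ‖T‖ ≠ 0) (ε : ℝ) (hε : 0 < ε)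
    (D : Set Y) (hD : D = closure (⇑T '' Metric.closedBall 0 1))
    (y₀star : Y →L[𝕜] 𝕜) (hy₀star : ‖y₀star‖ < ε / ‖T‖)
    (y₀ : Y) (hy₀D : y₀ ∈ D) (hy₀ : y₀ ≠ 0)
    (hexp₁ : ∀ y ∈ D, ‖y‖ + RCLike.re (y₀star y) ≤ ‖y₀‖ + RCLike.re (y₀star y₀))
    (hexp₂ : ∀ v : ℕ → Y, (∀ n, v n ∈ D) →
      Tendsto (fun n => ‖v n‖ + RCLike.re (y₀star (v n))) atTop
        (nhds (‖y₀‖ + RCLike.re (y₀star y₀))) →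
      Tendsto v atTop (nhds y₀))
    (S : X →L[𝕜] Y) (hS : ∀ x : X, S x = T x + y₀star (T x) • ((‖y₀‖ : 𝕜)⁻¹ • y₀))
    (z₀ : Y) (hz₀ : z₀ = (1 + y₀star y₀ / (‖y₀‖ : 𝕜)) • y₀) :
    ‖S - T‖ < ε ∧
    (‖S‖ = ‖y₀‖ + RCLike.re (y₀star y₀) ∧ ‖S‖ = ‖z₀‖ ∧
      z₀ ∈ closure (⇑S '' Metric.closedBall 0 1)) ∧
    (∀ x : ℕ → X, (∀ n, x n ∈ Metric.closedBall (0 : X) 1) →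
      Tendsto (fun n => ‖S (x n)‖) atTop (nhds ‖S‖) →
      ∃ θ : ℕ → 𝕜, (∀ n, ‖θ n‖ = 1) ∧
        Tendsto (fun n => S (θ n • x n)) atTop (nhds z₀)) := by
  have hTpos : (0:ℝ) < ‖T‖ := lt_of_le_of_ne (norm_nonneg T) (Ne.symm hT)
  have hr : (0:ℝ) < ‖y₀‖ := norm_pos_iff.mpr hy₀
  set c : 𝕜 := y₀star y₀ with hc
  set M : ℝ := ‖y₀‖ + RCLike.re c with hM
  -- the unit vector
  set w : Y := (‖y₀‖ : 𝕜)⁻¹ • y₀ with hw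
  have hwnorm : ‖w‖ = 1 := by
    rw [hw, norm_smul, norm_inv, RCLike.norm_ofReal, abs_of_pos hr,
      inv_mul_cancel₀ (ne_of_gt hr)]
  -- D is balanced
  have hbal : ∀ θ : 𝕜, ‖θ‖ = 1 → ∀ y ∈ D, θ • y ∈ D := by
    intro θ hθ y hy
    rw [hD] at hy ⊢
    refine map_mem_closure (continuous_const_smul θ) hy ?_
    rintro z ⟨u, hu, rfl⟩
    refine ⟨θ • u, ?_, map_smul T θ u⟩
    rw [Metric.mem_closedBall, dist_zero_right] at hu ⊢
    rw [norm_smul, hθ, one_mul]; exact hu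
  -- membership of images
  have hTmem : ∀ u : X, ‖u‖ ≤ 1 → T u ∈ D := by
    intro u hu
    rw [hD]
    exact subset_closure ⟨u, by simpa [Metric.mem_closedBall, dist_zero_right] using hu, rfl⟩
  -- c is a nonnegative real
  have hcre : ‖c‖ = RCLike.re c := by
    obtain ⟨θ₀, hθ₀, hθ₀c⟩ := exists_unimodular_mul c
    have h1 := hexp₁ (θ₀ • y₀) (hbal θ₀ hθ₀ y₀ hy₀D)
    rw [norm_smul, hθ₀, one_mul, map_smul, smul_eq_mul, ← hc, hθ₀c, RCLike.ofReal_re] at h1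
    have h2 : RCLike.re c ≤ ‖c‖ := RCLike.re_le_norm c
    linarith
  have hcnn : (0:ℝ) ≤ RCLike.re c := hcre ▸ norm_nonneg c
  have hcim : RCLike.im c = 0 := by
    have h3 : ‖c‖ ^ 2 = RCLike.re c * RCLike.re c + RCLike.im c * RCLike.im c := RCLike.norm_sq_eq_def
    have := hcre
    nlinarith [sq_nonneg (RCLike.im c)]
  have hcr : ((RCLike.re c : ℝ) : 𝕜) = c := by
    conv_rhs => rw [← RCLike.re_add_im c]
    rw [hcim]; simp
  -- key bound
  have key : ∀ u : X, ‖u‖ ≤ 1 → ‖T u‖ + ‖y₀star (T u)‖ ≤ M := by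
    intro u hu
    obtain ⟨θ, hθ, hθa⟩ := exists_unimodular_mul (y₀star (T u))
    have h1 := hexp₁ (θ • T u) (hbal θ hθ _ (hTmem u hu))
    rw [norm_smul, hθ, one_mul, map_smul, smul_eq_mul, hθa, RCLike.ofReal_re] at h1
    exact h1
  have hSbound : ∀ u : X, ‖u‖ ≤ 1 → ‖S u‖ ≤ M := by
    intro u hu
    calc ‖S u‖ = ‖T u + y₀star (T u) • w‖ := by rw [hS u]
      _ ≤ ‖T u‖ + ‖y₀star (T u) • w‖ := norm_add_le _ _
      _ = ‖T u‖ + ‖y₀star (T u)‖ := by rw [norm_smul, hwnorm, mul_one]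
      _ ≤ M := key u hu
  have hMnn : (0:ℝ) ≤ M := by positivity
  have hSnorm_le : ‖S‖ ≤ M := by
    refine S.opNorm_le_bound hMnn (fun u => ?_)
    rcases eq_or_ne u 0 with rfl | hu
    · simp [hMnn]
    · have hun : (0:ℝ) < ‖u‖ := norm_pos_iff.mpr hu
      have h1 : ‖S (((‖u‖:𝕜))⁻¹ • u)‖ ≤ M := by
        refine hSbound _ ?_
        rw [norm_smul, norm_inv, RCLike.norm_ofReal, abs_of_pos hun,
          inv_mul_cancel₀ (ne_of_gt hun)]
      rw [map_smul, norm_smul, norm_inv, RCLike.norm_ofReal, abs_of_pos hun] at h1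
      calc ‖S u‖ = ‖u‖ * (‖u‖⁻¹ * ‖S u‖) := by field_simp
        _ ≤ ‖u‖ * M := by
            refine mul_le_mul_of_nonneg_left h1 (le_of_lt hun)
        _ = M * ‖u‖ := mul_comm _ _
  -- the continuous map g
  set g : Y → Y := fun y => y + y₀star y • w with hg
  have hgc : Continuous g := continuous_id.add ((y₀star.continuous).smul continuous_const)
  have hgT : ∀ u : X, g (T u) = S u := fun u => (hS u).symm
  have hgy₀ : g y₀ = z₀ := by
    rw [hg, hz₀, hw]
    simp only [add_smul, one_smul, div_eq_mul_inv, mul_smul, ← hc]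
  have hz₀mem : z₀ ∈ closure (⇑S '' Metric.closedBall 0 1) := by
    rw [← hgy₀]
    refine map_mem_closure hgc (hD ▸ hy₀D) ?_
    rintro z ⟨u, hu, rfl⟩
    exact ⟨u, hu, (hgT u).symm⟩
  have hz₀norm : ‖z₀‖ = M := by
    rw [hz₀, ← hcr, norm_smul]
    have : (1 : 𝕜) + ((RCLike.re c : ℝ) : 𝕜) / ((‖y₀‖:ℝ) : 𝕜) =
        (((1 + RCLike.re c / ‖y₀‖ : ℝ)) : 𝕜) := by push_cast; ring
    rw [this, RCLike.norm_ofReal, abs_of_pos (by positivity)]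
    rw [hM]; field_simp
  have hSnorm_ge : ‖z₀‖ ≤ ‖S‖ := by
    have hsub : ⇑S '' Metric.closedBall 0 1 ⊆ {y : Y | ‖y‖ ≤ ‖S‖} := by
      rintro z ⟨u, hu, rfl⟩
      exact S.unit_le_opNorm u (by simpa [Metric.mem_closedBall, dist_zero_right] using hu)
    exact closure_minimal hsub (isClosed_le continuous_norm continuous_const) hz₀mem
  have hSnorm : ‖S‖ = M := le_antisymm hSnorm_le (hz₀norm ▸ hSnorm_ge)
  refine ⟨?_, ⟨hSnorm, hSnorm.trans hz₀norm.symm, hz₀mem⟩, ?_⟩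
  · -- ‖S - T‖ < ε
    have hle : ‖S - T‖ ≤ ‖y₀star‖ * ‖T‖ := by
      refine ContinuousLinearMap.opNorm_le_bound _ (by positivity) (fun u => ?_)
      have h1 : (S - T) u = y₀star (T u) • w := by
        rw [ContinuousLinearMap.sub_apply, hS u]; abel
      rw [h1, norm_smul, hwnorm, mul_one]
      calc ‖y₀star (T u)‖ ≤ ‖y₀star‖ * ‖T u‖ := y₀star.le_opNorm _
        _ ≤ ‖y₀star‖ * (‖T‖ * ‖u‖) :=
            mul_le_mul_of_nonneg_left (T.le_opNorm u) (norm_nonneg _)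
        _ = ‖y₀star‖ * ‖T‖ * ‖u‖ := by ring
    exact lt_of_le_of_lt hle ((lt_div_iff₀ hTpos).mp hy₀star)
  · -- part (iii)
    intro x hx hlim
    have hx1 : ∀ n, ‖x n‖ ≤ 1 := fun n => by
      simpa [Metric.mem_closedBall, dist_zero_right] using hx n
    choose θ hθ hθa using fun n => exists_unimodular_mul (y₀star (T (x n)))
    refine ⟨θ, hθ, ?_⟩
    set v : ℕ → Y := fun n => T (θ n • x n) with hv
    have hθx : ∀ n, ‖θ n • x n‖ ≤ 1 := fun n => by
      rw [norm_smul, hθ n, one_mul]; exact hx1 n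
    have hvD : ∀ n, v n ∈ D := fun n => hTmem _ (hθx n)
    have hφv : ∀ n, ‖v n‖ + RCLike.re (y₀star (v n)) = ‖T (x n)‖ + ‖y₀star (T (x n))‖ := by
      intro n
      rw [hv]
      simp only [map_smul, norm_smul, hθ n, one_mul, smul_eq_mul, hθa n, RCLike.ofReal_re]
    have hlow : ∀ n, ‖S (x n)‖ ≤ ‖v n‖ + RCLike.re (y₀star (v n)) := by
      intro n
      rw [hφv n]
      calc ‖S (x n)‖ = ‖T (x n) + y₀star (T (x n)) • w‖ := by rw [hS]
        _ ≤ ‖T (x n)‖ + ‖y₀star (T (x n)) • w‖ := norm_add_le _ _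
        _ = ‖T (x n)‖ + ‖y₀star (T (x n))‖ := by rw [norm_smul, hwnorm, mul_one]
    have hup : ∀ n, ‖v n‖ + RCLike.re (y₀star (v n)) ≤ M := by
      intro n; rw [hφv n]; exact key _ (hx1 n)
    have hlim' : Tendsto (fun n => ‖S (x n)‖) atTop (nhds M) := hSnorm ▸ hlim
    have hφlim : Tendsto (fun n => ‖v n‖ + RCLike.re (y₀star (v n))) atTop (nhds M) :=
      tendsto_of_tendsto_of_tendsto_of_le_of_le hlim' tendsto_const_nhds hlow hup
    have hvlim : Tendsto v atTop (nhds y₀) := hexp₂ v hvD hφlim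
    have : Tendsto (fun n => g (v n)) atTop (nhds (g y₀)) := (hgc.tendsto y₀).comp hvlim
    rw [hgy₀] at this
    refine this.congr (fun n => ?_)
    exact hgT (θ n • x n)
end

section
/- Let X and Y be Banach spaces over 𝕂 (= ℝ or ℂ) and let T : X → Y be a bounded linear operator. If T quasi attains its norm toward y₀ ∈ Y (i.e., y₀ lies in the norm closure of T(B_X) and ‖y₀‖ = ‖T‖), then the adjoint operator T* : Y* → X* attains its norm; moreover, T* attains its norm at every y* ∈ Y* with ‖y*‖ = 1 and |y*(y₀)| = ‖y₀‖, i.e., ‖T* y*‖ = ‖T*‖ = ‖T‖ for every such y*. -/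
/-! A functional `g` is bounded by `‖g ∘ T‖` on `T(B_X)`, hence on its closure, so
`‖g y₀‖ ≤ ‖g ∘ T‖ ≤ ‖T‖`. When `‖g‖ = 1` and `|g y₀| = ‖y₀‖ = ‖T‖`, the two ends agree; a
Hahn–Banach norming functional of `y₀` provides such a `g`. -/

open Metric

namespace ContinuousLinearMap

variable {𝕜 E F G : Type*} [NontriviallyNormedField 𝕜]
  [SeminormedAddCommGroup E] [NormedSpace 𝕜 E] [SeminormedAddCommGroup F] [NormedSpace 𝕜 F]
  [SeminormedAddCommGroup G] [NormedSpace 𝕜 G]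

theorem norm_apply_le_norm_comp_of_mem_closure_image_closedBall (T : E →L[𝕜] F)
    (g : F →L[𝕜] G) {y : F} (hy : y ∈ closure (T '' closedBall 0 1)) :
    ‖g y‖ ≤ ‖g.comp T‖ := by
  have himage : T '' closedBall 0 1 ⊆ {y | ‖g y‖ ≤ ‖g.comp T‖} := by
    rintro _ ⟨x, hx, rfl⟩
    simpa using (g.comp T).le_opNorm_of_le (mem_closedBall_zero_iff.mp hx)
  exact closure_minimal himage (isClosed_le (by fun_prop) continuous_const) hy

theorem norm_comp_eq_of_mem_closure_image_closedBall (T : E →L[𝕜] F) {g : F →L[𝕜] G}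
    (hg : ‖g‖ ≤ 1) {y : F} (hy : y ∈ closure (T '' closedBall 0 1)) (hgy : ‖T‖ ≤ ‖g y‖) :
    ‖g.comp T‖ = ‖T‖ := by
  refine le_antisymm ?_ (hgy.trans (norm_apply_le_norm_comp_of_mem_closure_image_closedBall T g hy))
  calc ‖g.comp T‖ ≤ ‖g‖ * ‖T‖ := g.opNorm_comp_le T
    _ ≤ ‖T‖ := mul_le_of_le_one_left (norm_nonneg T) hg

end ContinuousLinearMap

theorem quasi_attains_implies_adjoint_attains_general {𝕜 X Y : Type*} [RCLike 𝕜]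
    [NormedAddCommGroup X] [NormedSpace 𝕜 X]
    [NormedAddCommGroup Y] [NormedSpace 𝕜 Y] [Nontrivial Y]
    (T : X →L[𝕜] Y) (y₀ : Y)
    (hy₀ : y₀ ∈ closure (⇑T '' Metric.closedBall 0 1)) (hy₀norm : ‖y₀‖ = ‖T‖) :
    (∃ g : Y →L[𝕜] 𝕜, ‖g‖ = 1 ∧ ‖g.comp T‖ = ‖T‖) ∧
    (∀ g : Y →L[𝕜] 𝕜, ‖g‖ = 1 → ‖g y₀‖ = ‖y₀‖ → ‖g.comp T‖ = ‖T‖) := by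
  have attains : ∀ g : Y →L[𝕜] 𝕜, ‖g‖ = 1 → ‖g y₀‖ = ‖y₀‖ → ‖g.comp T‖ = ‖T‖ :=
    fun g hg hgy ↦ T.norm_comp_eq_of_mem_closure_image_closedBall hg.le hy₀
      (by rw [hgy, hy₀norm])
  obtain ⟨g, hg, hgy⟩ := exists_dual_vector' 𝕜 y₀
  exact ⟨⟨g, hg, attains g hg (by simp [hgy])⟩, attains⟩

/-- If `T` quasi attains its norm toward `y₀`, then the adjoint `T*` (here
`y* ↦ y* ∘ T`) attains its norm; moreover `T*` attains its norm (namely `‖T*‖ = ‖T‖`) at every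
norm-one functional `y*` with `|y*(y₀)| = ‖y₀‖`. -/
theorem quasi_attains_implies_adjoint_attains {𝕜 X Y : Type*} [RCLike 𝕜]
    [NormedAddCommGroup X] [NormedSpace 𝕜 X] [CompleteSpace X]
    [NormedAddCommGroup Y] [NormedSpace 𝕜 Y] [CompleteSpace Y] [Nontrivial Y]
    (T : X →L[𝕜] Y) (y₀ : Y)
    (hy₀ : y₀ ∈ closure (⇑T '' Metric.closedBall 0 1)) (hy₀norm : ‖y₀‖ = ‖T‖) :
    (∃ g : Y →L[𝕜] 𝕜, ‖g‖ = 1 ∧ ‖g.comp T‖ = ‖T‖) ∧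
    (∀ g : Y →L[𝕜] 𝕜, ‖g‖ = 1 → ‖g y₀‖ = ‖y₀‖ → ‖g.comp T‖ = ‖T‖) :=
  quasi_attains_implies_adjoint_attains_general T y₀ hy₀ hy₀norm
end

section
/- Let X and Y be Banach spaces over 𝕂 (= ℝ or ℂ). Then every weakly compact bounded linear operator T : X → Y can be approximated in the operator norm by weakly compact operators that quasi attain their norm: the set QNA(X,Y) ∩ W(X,Y) is dense in W(X,Y), the space of weakly compact operators from X to Y with the operator norm. -/
variable {𝕜 X Y : Type*} [RCLike 𝕜]
  [NormedAddCommGroup X] [NormedSpace 𝕜 X]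
  [NormedAddCommGroup Y] [NormedSpace 𝕜 Y]

/-- `T` is weakly compact: the norm closure of `T '' B_X` is compact in the weak topology. -/
def IsWeaklyCompactOperator (T : X →L[𝕜] Y) : Prop :=
  IsCompact (⇑(toWeakSpace 𝕜 Y) '' closure (⇑T '' Metric.closedBall 0 1))

/-- `T` quasi attains its norm. -/
def QuasiAttainsNorm (T : X →L[𝕜] Y) : Prop :=
  ∃ u ∈ closure (⇑T '' Metric.closedBall 0 1), ‖u‖ = ‖T‖

/-!
Starting from `B 0 = 1`, pick `x k` in the unit ball almost norming `T_k = B k ∘ T`, a functional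
`g k` norming `T_k (x k)`, and set `B (k + 1) = A k * B k` with `A k` the rank-one perturbation of
the identity that stretches `T_k (x k)` by `1 + c / 2 ^ k`. The `B k` converge geometrically to
some `B` with `‖B - 1‖ ≤ 4 c`, so `S = B ∘ T` is weakly compact and close to `T`. Since each
`‖T_k‖` grows at least by the stretch up to a summable error, the later points stay almost
norming in the direction of the earlier functionals: `‖g j (T_j (x k))‖ ≥ ‖T_j‖ - 3 / 2 ^ j`
for `j < k`. A weak cluster point `y ∈ closure (T '' B_X)` of the `T (x k)` inherits these
bounds, and letting `j → ∞` gives `‖B y‖ ≥ ‖S‖` with `B y ∈ closure (S '' B_X)`.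
-/

open Metric Filter Topology Set

section WeaklyCompact

variable {Z : Type*} [NormedAddCommGroup Z] [NormedSpace 𝕜 Z] {T : X →L[𝕜] Y}

theorem isClosed_of_isCompact_image_toWeakSpace {s : Set Y}
    (hs : IsCompact (toWeakSpace 𝕜 Y '' s)) : IsClosed s := by
  rw [← preimage_image_eq s (toWeakSpace 𝕜 Y).injective]
  exact hs.isClosed.preimage (toWeakSpaceCLM 𝕜 Y).continuous

theorem IsWeaklyCompactOperator.isCompact_image (hT : IsWeaklyCompactOperator T)
    (B : Y →L[𝕜] Z) :
    IsCompact (toWeakSpace 𝕜 Z '' (B '' closure (T '' closedBall 0 1))) := by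
  convert hT.image (WeakSpace.map B).continuous using 1
  simp only [image_image]
  rfl

theorem IsWeaklyCompactOperator.closure_image_comp (hT : IsWeaklyCompactOperator T)
    (B : Y →L[𝕜] Z) :
    closure (B.comp T '' closedBall 0 1) = B '' closure (T '' closedBall 0 1) := by
  rw [ContinuousLinearMap.coe_comp, image_comp]
  exact subset_antisymm
    (closure_minimal (image_mono subset_closure)
      (isClosed_of_isCompact_image_toWeakSpace (hT.isCompact_image B)))
    (image_closure_subset_closure_image B.continuous)

theorem IsWeaklyCompactOperator.clm_comp (hT : IsWeaklyCompactOperator T) (B : Y →L[𝕜] Z) :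
    IsWeaklyCompactOperator (B.comp T) := by
  rw [IsWeaklyCompactOperator, hT.closure_image_comp B]
  exact hT.isCompact_image B

theorem IsWeaklyCompactOperator.exists_mem_closure_forall_le_norm_apply
    (hT : IsWeaklyCompactOperator T) (x : ℕ → X) (hx : ∀ k, ‖x k‖ ≤ 1) :
    ∃ y ∈ closure (T '' closedBall 0 1), ∀ (f : Y →L[𝕜] 𝕜) (r : ℝ),
      (∀ᶠ k in atTop, r ≤ ‖f (T (x k))‖) → r ≤ ‖f y‖ := by
  obtain ⟨_, ⟨y, hy, rfl⟩, hcluster⟩ := hT.exists_mapClusterPt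
    (f := atTop) (u := fun k ↦ toWeakSpace 𝕜 Y (T (x k))) <| tendsto_principal.2 <|
      Eventually.of_forall fun k ↦
        mem_image_of_mem _ (subset_closure ⟨x k, mem_closedBall_zero_iff.2 (hx k), rfl⟩)
  refine ⟨y, hy, fun f r hr ↦ ?_⟩
  have hclosed : IsClosed {v : WeakSpace 𝕜 Y | r ≤ ‖topDualPairing 𝕜 Y f v‖} :=
    isClosed_le continuous_const (WeakBilin.eval_continuous _ f).norm
  exact hclosed.mem_of_mapClusterPt hcluster hr

theorem QuasiAttainsNorm.of_le_norm {S : X →L[𝕜] Y} {u : Y}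
    (hu : u ∈ closure (S '' closedBall 0 1)) (hS : ‖S‖ ≤ ‖u‖) : QuasiAttainsNorm S := by
  refine ⟨u, hu, le_antisymm ?_ hS⟩
  have hsub : closure (S '' closedBall 0 1) ⊆ closedBall 0 ‖S‖ := by
    refine closure_minimal ?_ isClosed_closedBall
    rintro _ ⟨x, hx, rfl⟩
    simpa using S.le_opNorm_of_le (mem_closedBall_zero_iff.1 hx)
  exact mem_closedBall_zero_iff.1 (hsub hu)

theorem IsWeaklyCompactOperator.quasiAttainsNorm_comp_of_tendsto
    (hT : IsWeaklyCompactOperator T) {B : ℕ → Y →L[𝕜] Z} {B₀ : Y →L[𝕜] Z}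
    (hB : Tendsto B atTop (𝓝 B₀)) {x : ℕ → X} (hx : ∀ k, ‖x k‖ ≤ 1) {g : ℕ → Z →L[𝕜] 𝕜}
    (hg : ∀ j, ‖g j‖ ≤ 1) {r : ℕ → ℝ} (hr : Tendsto r atTop (𝓝 0))
    (h : ∀ j k, j < k → ‖(B j).comp T‖ - r j ≤ ‖g j (B j (T (x k)))‖) :
    QuasiAttainsNorm (B₀.comp T) := by
  obtain ⟨y, hy, hy_le⟩ := hT.exists_mem_closure_forall_le_norm_apply x hx
  have hbound : ∀ j, ‖(B j).comp T‖ - r j ≤ ‖B j y‖ := fun j ↦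
    calc ‖(B j).comp T‖ - r j ≤ ‖(g j).comp (B j) y‖ :=
          hy_le _ _ <| (eventually_gt_atTop j).mono fun k hk ↦ h j k hk
      _ ≤ ‖B j y‖ := (g j).le_of_opNorm_le (hg j) _ |>.trans_eq (one_mul _)
  have hlim : Tendsto (fun j ↦ ‖(B j).comp T‖ - r j) atTop (𝓝 (‖B₀.comp T‖ - 0)) :=
    (((continuous_id.clm_comp continuous_const).tendsto B₀).comp hB).norm.sub hr
  have hBy : Tendsto (fun j ↦ ‖B j y‖) atTop (𝓝 ‖B₀ y‖) :=
    (((continuous_id.clm_apply continuous_const).tendsto B₀).comp hB).norm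
  refine .of_le_norm (u := B₀ y) ?_ (by simpa using le_of_tendsto_of_tendsto' hlim hBy hbound)
  rw [hT.closure_image_comp]
  exact mem_image_of_mem B₀ hy

end WeaklyCompact

theorem exists_perturbation_stretching (y : Y) {ε : ℝ} (hε : 0 ≤ ε) :
    ∃ (A : Y →L[𝕜] Y) (g : Y →L[𝕜] 𝕜), ‖g‖ ≤ 1 ∧ ‖A - 1‖ ≤ ε ∧
      ‖A y‖ = (1 + ε) * ‖y‖ ∧ ∀ z, ‖A z‖ ≤ ‖z‖ + ε * ‖g z‖ := by
  obtain ⟨g, hg, hgy⟩ := exists_dual_vector'' 𝕜 y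
  -- for `y = 0` the junk value `ε / 0 = 0` makes `w = 0`
  set w : Y := ((ε / ‖y‖ : ℝ) : 𝕜) • y
  have hw : ‖w‖ ≤ ε := by
    rcases eq_or_ne y 0 with rfl | hy
    · simpa [w] using hε
    · rw [norm_smul, RCLike.norm_ofReal, abs_of_nonneg (by positivity),
        div_mul_cancel₀ _ (norm_ne_zero_iff.2 hy)]
  have hAy : y + g y • w = ((1 + ε : ℝ) : 𝕜) • y := by
    rcases eq_or_ne y 0 with rfl | hy
    · simp
    · rw [hgy, smul_smul, ← RCLike.ofReal_mul, mul_div_cancel₀ _ (norm_ne_zero_iff.2 hy),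
        RCLike.ofReal_add, add_smul, RCLike.ofReal_one, one_smul]
  refine ⟨1 + g.smulRight w, g, hg, ?_, ?_, fun z ↦ ?_⟩
  · rw [add_sub_cancel_left, ContinuousLinearMap.norm_smulRight_apply]
    nlinarith [norm_nonneg g, norm_nonneg w]
  · change ‖y + g y • w‖ = _
    rw [hAy, norm_smul, RCLike.norm_ofReal, abs_of_nonneg (by linarith)]
  · calc ‖(1 + g.smulRight w) z‖ = ‖z + g z • w‖ := rfl
      _ ≤ ‖z‖ + ‖g z‖ * ‖w‖ := (norm_add_le _ _).trans_eq (by rw [norm_smul])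
      _ ≤ ‖z‖ + ε * ‖g z‖ := by nlinarith [norm_nonneg (g z)]

structure NormingSequence (T : X →L[𝕜] Y) (c : ℝ) where
  A : ℕ → Y →L[𝕜] Y
  B : ℕ → Y →L[𝕜] Y
  x : ℕ → X
  g : ℕ → Y →L[𝕜] 𝕜
  B_zero : B 0 = 1
  B_succ : ∀ k, B (k + 1) = A k * B k
  norm_x_le_one : ∀ k, ‖x k‖ ≤ 1
  norm_g_le_one : ∀ k, ‖g k‖ ≤ 1
  norm_comp_sub_le_norm_apply : ∀ k, ‖(B k).comp T‖ - c * 4⁻¹ ^ k ≤ ‖B k (T (x k))‖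
  norm_A_sub_one_le : ∀ k, ‖A k - 1‖ ≤ c * 2⁻¹ ^ k
  norm_A_apply_eq : ∀ k, ‖A k (B k (T (x k)))‖ = (1 + c * 2⁻¹ ^ k) * ‖B k (T (x k))‖
  norm_A_apply_le : ∀ k y, ‖A k y‖ ≤ ‖y‖ + c * 2⁻¹ ^ k * ‖g k y‖

namespace NormingSequence

theorem nonempty (T : X →L[𝕜] Y) {c : ℝ} (hc : 0 < c) : Nonempty (NormingSequence T c) := by
  have step : ∀ (k : ℕ) (B : Y →L[𝕜] Y), ∃ p : (Y →L[𝕜] Y) × X × (Y →L[𝕜] 𝕜),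
      ‖p.2.1‖ ≤ 1 ∧ ‖p.2.2‖ ≤ 1 ∧ ‖B.comp T‖ - c * 4⁻¹ ^ k ≤ ‖B (T p.2.1)‖ ∧
      ‖p.1 - 1‖ ≤ c * 2⁻¹ ^ k ∧ ‖p.1 (B (T p.2.1))‖ = (1 + c * 2⁻¹ ^ k) * ‖B (T p.2.1)‖ ∧
      ∀ y, ‖p.1 y‖ ≤ ‖y‖ + c * 2⁻¹ ^ k * ‖p.2.2 y‖ := by
    intro k B
    obtain ⟨x, hx, hBx⟩ := (B.comp T).exists_lt_apply_of_lt_opNorm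
      (sub_lt_self ‖B.comp T‖ (by positivity : 0 < c * 4⁻¹ ^ k))
    obtain ⟨A, g, hg, hA⟩ := exists_perturbation_stretching (𝕜 := 𝕜) (B (T x))
      (by positivity : 0 ≤ c * 2⁻¹ ^ k)
    exact ⟨(A, x, g), hx.le, hg, hBx.le, hA⟩
  choose p hp using step
  let B : ℕ → Y →L[𝕜] Y := fun n ↦ Nat.rec 1 (fun k Bk ↦ (p k Bk).1 * Bk) n
  exact ⟨{
    A := fun k ↦ (p k (B k)).1
    B := B
    x := fun k ↦ (p k (B k)).2.1
    g := fun k ↦ (p k (B k)).2.2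
    B_zero := rfl
    B_succ := fun _ ↦ rfl
    norm_x_le_one := fun k ↦ (hp k (B k)).1
    norm_g_le_one := fun k ↦ (hp k (B k)).2.1
    norm_comp_sub_le_norm_apply := fun k ↦ (hp k (B k)).2.2.1
    norm_A_sub_one_le := fun k ↦ (hp k (B k)).2.2.2.1
    norm_A_apply_eq := fun k ↦ (hp k (B k)).2.2.2.2.1
    norm_A_apply_le := fun k ↦ (hp k (B k)).2.2.2.2.2 }⟩

variable {T : X →L[𝕜] Y} {c : ℝ} (P : NormingSequence T c)

theorem norm_B_le_two (hc : c ≤ 4⁻¹) (k : ℕ) : ‖P.B k‖ ≤ 2 := by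
  suffices ‖P.B k‖ ≤ 2 - 2⁻¹ ^ k by linarith [pow_pos (by norm_num : (0 : ℝ) < 2⁻¹) k]
  induction k with
  | zero =>
    rw [P.B_zero, pow_zero]
    exact ContinuousLinearMap.norm_id_le.trans (by norm_num)
  | succ k ih =>
    have hstep : ‖P.B (k + 1)‖ ≤ (1 + c * 2⁻¹ ^ k) * ‖P.B k‖ :=
      calc ‖P.B (k + 1)‖ = ‖P.B k + (P.A k - 1) * P.B k‖ := by
            rw [P.B_succ, sub_mul, one_mul, add_sub_cancel]
        _ ≤ ‖P.B k‖ + ‖P.A k - 1‖ * ‖P.B k‖ := by grw [norm_add_le, norm_mul_le]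
        _ ≤ ‖P.B k‖ + c * 2⁻¹ ^ k * ‖P.B k‖ := by grw [P.norm_A_sub_one_le k]
        _ = _ := by ring
    have ht : (0 : ℝ) ≤ 2⁻¹ ^ k := by positivity
    have hgrowth : (1 + c * 2⁻¹ ^ k) * ‖P.B k‖ ≤ (1 + 2⁻¹ ^ k / 4) * (2 - 2⁻¹ ^ k) :=
      mul_le_mul (by nlinarith) ih (norm_nonneg _) (by positivity)
    rw [pow_succ]
    nlinarith

theorem exists_tendsto_B [CompleteSpace Y] (hc : c ≤ 4⁻¹) :
    ∃ B₀, Tendsto P.B atTop (𝓝 B₀) ∧ ‖B₀ - 1‖ ≤ 4 * c := by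
  have hdist : ∀ k, dist (P.B k) (P.B (k + 1)) ≤ 2 * c * 2⁻¹ ^ k := fun k ↦
    calc dist (P.B k) (P.B (k + 1)) = ‖(P.A k - 1) * P.B k‖ := by
          rw [dist_eq_norm', P.B_succ, sub_mul, one_mul]
      _ ≤ c * 2⁻¹ ^ k * 2 := by
          have hcoeff : 0 ≤ c * 2⁻¹ ^ k := (norm_nonneg _).trans (P.norm_A_sub_one_le k)
          grw [norm_mul_le, P.norm_A_sub_one_le k, P.norm_B_le_two hc k]
      _ = 2 * c * 2⁻¹ ^ k := by ring
  obtain ⟨B₀, hB₀⟩ := cauchySeq_tendsto_of_complete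
    (cauchySeq_of_le_geometric 2⁻¹ (2 * c) (by norm_num) hdist)
  refine ⟨B₀, hB₀, ?_⟩
  have := dist_le_of_le_geometric_of_tendsto 2⁻¹ (2 * c) (by norm_num) hdist hB₀ 0
  rw [P.B_zero, dist_comm, dist_eq_norm] at this
  norm_num at this
  linarith

def op (k : ℕ) : X →L[𝕜] Y := (P.B k).comp T

theorem op_succ (k : ℕ) : P.op (k + 1) = (P.A k).comp (P.op k) := by
  rw [op, op, P.B_succ, ContinuousLinearMap.mul_def, ContinuousLinearMap.comp_assoc]

theorem norm_op_succ_sub_le (k : ℕ) : ‖P.op (k + 1) - P.op k‖ ≤ c * 2⁻¹ ^ k * ‖P.op k‖ := by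
  have hsub : P.op (k + 1) - P.op k = (P.A k - 1).comp (P.op k) := by
    rw [op_succ, ContinuousLinearMap.sub_comp]; rfl
  rw [hsub]
  grw [ContinuousLinearMap.opNorm_comp_le, P.norm_A_sub_one_le k]

theorem nonneg (P : NormingSequence T c) : 0 ≤ c := by
  simpa using (norm_nonneg _).trans (P.norm_A_sub_one_le 0)

theorem norm_op_succ_ge (hc : c ≤ 1) (k : ℕ) :
    ‖P.op k‖ + c * 2⁻¹ ^ k * ‖P.op k‖ - 2 * (c * 4⁻¹ ^ k) ≤ ‖P.op (k + 1)‖ := by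
  have hδ : 0 ≤ c * 4⁻¹ ^ k := mul_nonneg P.nonneg (by positivity)
  have hε : c * 2⁻¹ ^ k ≤ 1 := by
    nlinarith [pow_le_one₀ (by norm_num : (0 : ℝ) ≤ 2⁻¹) (by norm_num) (n := k), P.nonneg]
  calc ‖P.op k‖ + c * 2⁻¹ ^ k * ‖P.op k‖ - 2 * (c * 4⁻¹ ^ k)
      ≤ (1 + c * 2⁻¹ ^ k) * (‖P.op k‖ - c * 4⁻¹ ^ k) := by nlinarith
    _ ≤ (1 + c * 2⁻¹ ^ k) * ‖P.op k (P.x k)‖ := by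
        gcongr
        · nlinarith [P.nonneg, pow_nonneg (by norm_num : (0 : ℝ) ≤ 2⁻¹) k]
        · exact P.norm_comp_sub_le_norm_apply k
    _ = ‖P.op (k + 1) (P.x k)‖ := by rw [op_succ]; exact (P.norm_A_apply_eq k).symm
    _ ≤ ‖P.op (k + 1)‖ := by
        simpa using (P.op (k + 1)).le_opNorm_of_le (P.norm_x_le_one k)

theorem monotone_defect (hc : c ≤ 1) {x : X} (hx : ‖x‖ ≤ 1) :
    Monotone fun i ↦ ‖P.op i‖ - ‖P.op i x‖ - 8 / 3 * (c * 4⁻¹ ^ i) := by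
  refine monotone_nat_of_le_succ fun i ↦ ?_
  have hx_succ : ‖P.op (i + 1) x‖ ≤ ‖P.op i x‖ + c * 2⁻¹ ^ i * ‖P.op i‖ :=
    calc ‖P.op (i + 1) x‖ ≤ ‖P.op i x‖ + ‖(P.op (i + 1) - P.op i) x‖ := by
          simpa using norm_le_insert' (P.op (i + 1) x) (P.op i x)
      _ ≤ ‖P.op i x‖ + c * 2⁻¹ ^ i * ‖P.op i‖ := by
          grw [(P.op (i + 1) - P.op i).le_opNorm_of_le hx, P.norm_op_succ_sub_le i, mul_one]
  have := P.norm_op_succ_ge hc i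
  simp only [pow_succ]
  linarith

theorem norm_op_sub_le_norm_g_apply (hc₀ : 0 < c) (hc : c ≤ 1) {j k : ℕ} (hjk : j < k) :
    ‖P.op j‖ - 3 * 2⁻¹ ^ j ≤ ‖P.g j (P.op j (P.x k))‖ := by
  have hdefect := P.monotone_defect hc (P.norm_x_le_one k) (hjk : j + 1 ≤ k)
  have hnorming := P.norm_comp_sub_le_norm_apply k
  have hδ : 0 ≤ c * 4⁻¹ ^ k := by positivity
  have hup : ‖P.op (j + 1) (P.x k)‖ ≤ ‖P.op j‖ + c * 2⁻¹ ^ j * ‖P.g j (P.op j (P.x k))‖ := by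
    rw [op_succ]
    change ‖P.A j (P.op j (P.x k))‖ ≤ _
    grw [P.norm_A_apply_le j, (P.op j).le_opNorm_of_le (P.norm_x_le_one k), mul_one]
  have hgrow := P.norm_op_succ_ge hc j
  have h4 : (4⁻¹ : ℝ) ^ j = 2⁻¹ ^ j * 2⁻¹ ^ j := by rw [← mul_pow]; norm_num
  simp only [pow_succ, h4] at hdefect hgrow
  have hct : 0 < c * 2⁻¹ ^ j := by positivity
  refine le_of_mul_le_mul_left ?_ hct
  change ‖P.op k‖ - c * 4⁻¹ ^ k ≤ ‖P.op k (P.x k)‖ at hnorming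
  nlinarith

end NormingSequence

theorem weakly_compact_quasi_attaining_dense_general
    {𝕜 X Y : Type*} [RCLike 𝕜]
    [NormedAddCommGroup X] [NormedSpace 𝕜 X]
    [NormedAddCommGroup Y] [NormedSpace 𝕜 Y] [CompleteSpace Y]
    (T : X →L[𝕜] Y) (hT : IsWeaklyCompactOperator T) (ε : ℝ) (hε : 0 < ε) :
    ∃ S : X →L[𝕜] Y, IsWeaklyCompactOperator S ∧ QuasiAttainsNorm S ∧ ‖S - T‖ < ε := by
  obtain ⟨c, hc₀, hc, hcε⟩ : ∃ c : ℝ, 0 < c ∧ c ≤ 4⁻¹ ∧ 4 * c * ‖T‖ < ε := by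
    obtain ⟨c, hc₀, hcε⟩ := exists_pos_mul_lt hε (4 * ‖T‖)
    exact ⟨min c 4⁻¹, lt_min hc₀ (by norm_num), min_le_right _ _, by grw [min_le_left]; linarith⟩
  obtain ⟨P⟩ := NormingSequence.nonempty T hc₀
  obtain ⟨B, hB, hB_one⟩ := P.exists_tendsto_B hc
  refine ⟨B.comp T, hT.clm_comp B, ?_, ?_⟩
  · have hr : Tendsto (fun j : ℕ ↦ 3 * (2⁻¹ : ℝ) ^ j) atTop (𝓝 0) := by
      simpa using (tendsto_pow_atTop_nhds_zero_of_lt_one (r := (2⁻¹ : ℝ)) (by norm_num)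
        (by norm_num)).const_mul 3
    exact hT.quasiAttainsNorm_comp_of_tendsto hB P.norm_x_le_one P.norm_g_le_one hr
      fun j k hjk ↦ P.norm_op_sub_le_norm_g_apply hc₀ (hc.trans (by norm_num)) hjk
  · calc ‖B.comp T - T‖ = ‖(B - 1).comp T‖ := by rw [ContinuousLinearMap.sub_comp]; rfl
      _ ≤ 4 * c * ‖T‖ := by grw [ContinuousLinearMap.opNorm_comp_le, hB_one]
      _ < ε := hcε

/-- the quasi norm attaining weakly compact operators are dense (in operator norm)
in the space of weakly compact operators. -/
theorem weakly_compact_quasi_attaining_dense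
    {𝕜 X Y : Type*} [RCLike 𝕜]
    [NormedAddCommGroup X] [NormedSpace 𝕜 X] [CompleteSpace X]
    [NormedAddCommGroup Y] [NormedSpace 𝕜 Y] [CompleteSpace Y]
    (T : X →L[𝕜] Y) (hT : IsWeaklyCompactOperator T) (ε : ℝ) (hε : 0 < ε) :
    ∃ S : X →L[𝕜] Y, IsWeaklyCompactOperator S ∧ QuasiAttainsNorm S ∧ ‖S - T‖ < ε :=
  weakly_compact_quasi_attaining_dense_general T hT ε hε
end

section
/- Let Y be an infinite-dimensional Banach space over 𝕂 (= ℝ or ℂ). Then there exists a subset K of the closed unit ball of Y which is closed, convex, and balanced (i.e., θK ⊆ K for every scalar θ with |θ| ≤ 1), such that sup{‖y‖ : y ∈ K} = 1 but ‖y‖ < 1 for every y ∈ K; in particular, K is not remotal from 0. -/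
open Filter Topology TopologicalSpace

/-!
Pass to a closed, separable, infinite-dimensional subspace `Z` and pick functionals `gₙ` that
separate the points of `Z` and satisfy `‖gₙ‖ → 0`. The set
`K = {y ∈ Z | ‖y‖ + ‖gₙ y‖ ≤ 1 for all n}` is `Z` cut with unit balls of continuous seminorms,
hence closed, convex and balanced. A point of `K` of norm `1` is killed by every `gₙ`, so it is `0`.
Conversely, finitely many `gₙ` have a common nonzero zero in the infinite-dimensional `Z`, and the
remaining `gₙ` are small, so every norm in `[0, 1)` is attained on `K`.
-/

theorem exists_linearIndependent_nat_of_not_finiteDimensional {K V : Type*} [DivisionRing K]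
    [AddCommGroup V] [Module K V] (hV : ¬ FiniteDimensional K V) :
    ∃ e : ℕ → V, LinearIndependent K e := by
  let b := Module.Basis.ofVectorSpace K V
  have : Infinite (Module.Basis.ofVectorSpaceIndex K V) :=
    not_finite_iff_infinite.1 fun _ => hV (Module.Finite.of_basis b)
  let emb := Infinite.natEmbedding (Module.Basis.ofVectorSpaceIndex K V)
  exact ⟨b ∘ emb, b.linearIndependent.comp emb emb.injective⟩

theorem Submodule.inf_iInf_ker_ne_bot {K V ι : Type*} [DivisionRing K] [AddCommGroup V]
    [Module K V] [Finite ι] {Z : Submodule K V} (hZ : ¬ FiniteDimensional K Z)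
    (f : ι → V →ₗ[K] K) : Z ⊓ ⨅ i, LinearMap.ker (f i) ≠ ⊥ := by
  intro hbot
  refine hZ (FiniteDimensional.of_injective (LinearMap.pi fun i => f i ∘ₗ Z.subtype) ?_)
  rw [injective_iff_map_eq_zero]
  intro y hy
  have : (y : V) ∈ Z ⊓ ⨅ i, LinearMap.ker (f i) :=
    ⟨y.2, (Submodule.mem_iInf _).2 fun i => congrFun hy i⟩
  simpa [hbot] using this

section Normed

variable {𝕜 E : Type*} [RCLike 𝕜] [NormedAddCommGroup E] [NormedSpace 𝕜 E]

theorem exists_isClosed_isSeparable_submodule_not_finiteDimensional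
    (hE : ¬ FiniteDimensional 𝕜 E) :
    ∃ Z : Submodule 𝕜 E, IsClosed (Z : Set E) ∧ IsSeparable (Z : Set E) ∧
      ¬ FiniteDimensional 𝕜 Z := by
  obtain ⟨e, he⟩ := exists_linearIndependent_nat_of_not_finiteDimensional hE
  set S := Submodule.span 𝕜 (Set.range e)
  refine ⟨S.topologicalClosure, S.isClosed_topologicalClosure, ?_, fun hZ => ?_⟩
  · rw [Submodule.topologicalClosure_coe]
    exact (Set.countable_range e).isSeparable.span.closure
  · let e' (n : ℕ) : S.topologicalClosure :=
      ⟨e n, S.le_topologicalClosure (Submodule.subset_span ⟨n, rfl⟩)⟩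
    exact Module.Finite.not_linearIndependent_of_infinite e'
      (LinearIndependent.of_comp S.topologicalClosure.subtype he)

theorem TopologicalSpace.IsSeparable.exists_strongDual_seq_separating {s : Set E}
    (hs : IsSeparable s) :
    ∃ f : ℕ → StrongDual 𝕜 E, (∀ n, ‖f n‖ ≤ 1) ∧ ∀ y ∈ s, (∀ n, f n y = 0) → y = 0 := by
  obtain ⟨c, hc, hsc⟩ := hs
  -- inserting `0` only makes the countable set nonempty, hence the range of a sequence
  obtain ⟨z, hz⟩ := (hc.insert 0).exists_eq_range (Set.insert_nonempty 0 c)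
  choose f hf1 hfz using fun n => exists_dual_vector'' 𝕜 (z n)
  refine ⟨f, hf1, fun y hy hfy => ?_⟩
  have hdist (n : ℕ) : ‖y‖ ≤ 2 * dist y (z n) := by
    have : ‖z n‖ ≤ ‖z n - y‖ := calc
      ‖z n‖ = ‖f n (z n - y)‖ := by simp [hfz, hfy]
      _ ≤ ‖z n - y‖ := by simpa using (f n).le_of_opNorm_le (hf1 n) (z n - y)
    rw [dist_eq_norm]
    linarith [norm_le_insert' y (z n), norm_sub_rev y (z n)]
  have hyz : y ∈ closure (Set.range z) := hz ▸ closure_mono (Set.subset_insert 0 c) (hsc hy)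
  by_contra hy0
  obtain ⟨n, hn⟩ := Metric.mem_closure_range_iff.1 hyz (‖y‖ / 2) (by positivity)
  linarith [hdist n]

theorem TopologicalSpace.IsSeparable.exists_strongDual_seq_tendsto_zero_separating
    {s : Set E} (hs : IsSeparable s) :
    ∃ g : ℕ → StrongDual 𝕜 E, Tendsto (‖g ·‖) cofinite (𝓝 0) ∧
      ∀ y ∈ s, (∀ n, g n y = 0) → y = 0 := by
  obtain ⟨f, hf1, hsep⟩ := hs.exists_strongDual_seq_separating (𝕜 := 𝕜)
  refine ⟨fun n => ((n + 1 : ℕ) : 𝕜)⁻¹ • f n, ?_, fun y hy hg => hsep y hy fun n => ?_⟩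
  · rw [Nat.cofinite_eq_atTop]
    refine squeeze_zero (fun _ => norm_nonneg _) (fun n => ?_)
      tendsto_one_div_add_atTop_nhds_zero_nat
    rw [norm_smul, norm_inv, RCLike.norm_natCast, Nat.cast_succ, one_div]
    exact mul_le_of_le_one_right (by positivity) (hf1 n)
  · simpa [Nat.cast_add_one_ne_zero] using hg n

end Normed

section PenalizedBall

variable {𝕜 E ι : Type*} [RCLike 𝕜] [NormedAddCommGroup E] [NormedSpace 𝕜 E]

def penalizedBall (Z : Submodule 𝕜 E) (g : ι → StrongDual 𝕜 E) : Set E :=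
  Z ∩ ⋂ i, (normSeminorm 𝕜 E + (normSeminorm 𝕜 𝕜).comp (g i : E →ₗ[𝕜] 𝕜)).closedBall 0 1

variable {Z : Submodule 𝕜 E} {g : ι → StrongDual 𝕜 E}

theorem mem_penalizedBall {y : E} :
    y ∈ penalizedBall Z g ↔ y ∈ Z ∧ ∀ i, ‖y‖ + ‖g i y‖ ≤ 1 := by
  simp [penalizedBall]

theorem isClosed_penalizedBall (hZ : IsClosed (Z : Set E)) : IsClosed (penalizedBall Z g) := by
  refine hZ.inter (isClosed_iInter fun i => ?_)
  rw [Seminorm.closedBall_zero_eq]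
  exact isClosed_le (continuous_norm.add (g i).continuous.norm) continuous_const

theorem convex_penalizedBall [NormedSpace ℝ E] [IsScalarTower ℝ 𝕜 E] :
    Convex ℝ (penalizedBall Z g) :=
  (Z.restrictScalars ℝ).convex.inter (convex_iInter fun _ => Seminorm.convex_closedBall _ _ _)

theorem balanced_penalizedBall : Balanced 𝕜 (penalizedBall Z g) := by
  refine Balanced.inter ?_ (balanced_iInter fun _ => Seminorm.balanced_closedBall_zero _ _)
  rintro a - _ ⟨y, hy, rfl⟩
  exact Z.smul_mem a hy

theorem norm_lt_one_of_mem_penalizedBall (hsep : ∀ y ∈ Z, (∀ i, g i y = 0) → y = 0) {y : E}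
    (hy : y ∈ penalizedBall Z g) : ‖y‖ < 1 := by
  rw [mem_penalizedBall] at hy
  by_contra! h1
  have : y = 0 := hsep y hy.1 fun i => norm_le_zero_iff.1 (by linarith [hy.2 i])
  rw [this, norm_zero] at h1
  linarith

theorem Ico_subset_norm_image_penalizedBall (hZ : ¬ FiniteDimensional 𝕜 Z)
    (hg : Tendsto (‖g ·‖) cofinite (𝓝 0)) : Set.Ico 0 1 ⊆ (‖·‖) '' penalizedBall Z g := by
  rintro t ⟨ht0, ht1⟩
  set F := {i | ¬ ‖g i‖ < 1 - t}
  have : Finite F := (eventually_cofinite.1 (hg.eventually (gt_mem_nhds (by linarith)))).to_subtype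
  obtain ⟨u, ⟨huZ, hu⟩, hu0⟩ := Submodule.exists_mem_ne_zero_of_ne_bot
    (Submodule.inf_iInf_ker_ne_bot hZ fun i : F => (g i : E →ₗ[𝕜] 𝕜))
  set y := ((t / ‖u‖ : ℝ) : 𝕜) • u
  have hy : ‖y‖ = t := by
    rw [norm_smul, RCLike.norm_ofReal, abs_of_nonneg (by positivity),
      div_mul_cancel₀ _ (norm_ne_zero_iff.2 hu0)]
  refine ⟨y, mem_penalizedBall.2 ⟨Z.smul_mem _ huZ, fun i => ?_⟩, hy⟩
  by_cases hi : i ∈ F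
  · have : g i u = 0 := (Submodule.mem_iInf _).1 hu ⟨i, hi⟩
    rw [show g i y = 0 by simp [y, this], norm_zero, add_zero, hy]
    exact ht1.le
  · calc ‖y‖ + ‖g i y‖ ≤ t + (1 - t) * t := by
          rw [hy]; gcongr; exact (g i).le_of_opNorm_le_of_le (not_not.1 hi).le hy.le
      _ ≤ 1 := by nlinarith

theorem isLUB_norm_image_penalizedBall (hZ : ¬ FiniteDimensional 𝕜 Z)
    (hg : Tendsto (‖g ·‖) cofinite (𝓝 0)) (hsep : ∀ y ∈ Z, (∀ i, g i y = 0) → y = 0) :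
    IsLUB ((‖·‖) '' penalizedBall Z g) 1 := by
  refine (isLUB_Ico zero_lt_one).of_subset_of_superset isLUB_Iic
    (Ico_subset_norm_image_penalizedBall hZ hg) ?_
  rintro _ ⟨y, hy, rfl⟩
  exact (norm_lt_one_of_mem_penalizedBall hsep hy).le

end PenalizedBall

theorem exists_closed_convex_balanced_not_remotal_general {𝕜 Y : Type*} [RCLike 𝕜]
    [NormedAddCommGroup Y] [NormedSpace 𝕜 Y]
    [NormedSpace ℝ Y] [IsScalarTower ℝ 𝕜 Y]
    (hY : ¬ FiniteDimensional 𝕜 Y) :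
    ∃ K : Set Y, K ⊆ Metric.closedBall 0 1 ∧ IsClosed K ∧ Convex ℝ K ∧ Balanced 𝕜 K ∧
      IsLUB ((fun y => ‖y‖) '' K) 1 ∧ (∀ y ∈ K, ‖y‖ < 1) ∧
      ¬ ∃ e ∈ K, ∀ e' ∈ K, ‖(0 : Y) - e'‖ ≤ ‖(0 : Y) - e‖ := by
  obtain ⟨Z, hZc, hZs, hZ⟩ := exists_isClosed_isSeparable_submodule_not_finiteDimensional hY
  obtain ⟨g, hg, hsep⟩ := hZs.exists_strongDual_seq_tendsto_zero_separating (𝕜 := 𝕜)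
  have hlt (y : Y) : y ∈ penalizedBall Z g → ‖y‖ < 1 := norm_lt_one_of_mem_penalizedBall hsep
  have hlub := isLUB_norm_image_penalizedBall hZ hg hsep
  refine ⟨penalizedBall Z g, fun y hy => mem_closedBall_zero_iff.2 (hlt y hy).le,
    isClosed_penalizedBall hZc, convex_penalizedBall, balanced_penalizedBall, hlub, hlt, ?_⟩
  rintro ⟨e, he, hmax⟩
  refine (hlt e he).not_ge (hlub.2 ?_)
  rintro _ ⟨y, hy, rfl⟩
  simpa using hmax y hy

/-- in every infinite-dimensional Banach space `Y` there is a closed, convex,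
balanced subset `K` of the closed unit ball with `sup {‖y‖ : y ∈ K} = 1` but `‖y‖ < 1` for every
`y ∈ K`; in particular `K` is not remotal from `0`. -/
theorem exists_closed_convex_balanced_not_remotal {𝕜 Y : Type*} [RCLike 𝕜]
    [NormedAddCommGroup Y] [NormedSpace 𝕜 Y] [CompleteSpace Y]
    [NormedSpace ℝ Y] [IsScalarTower ℝ 𝕜 Y]
    (hY : ¬ FiniteDimensional 𝕜 Y) :
    ∃ K : Set Y, K ⊆ Metric.closedBall 0 1 ∧ IsClosed K ∧ Convex ℝ K ∧ Balanced 𝕜 K ∧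
      IsLUB ((fun y => ‖y‖) '' K) 1 ∧ (∀ y ∈ K, ‖y‖ < 1) ∧
      ¬ ∃ e ∈ K, ∀ e' ∈ K, ‖(0 : Y) - e'‖ ≤ ‖(0 : Y) - e‖ :=
  exists_closed_convex_balanced_not_remotal_general hY
end

section
/- Let X and Y be Banach spaces over 𝕂 (= ℝ or ℂ) and let T : X → Y be a bounded linear operator that quasi attains its norm. If the range T(X) is closed in Y and the kernel ker T is proximinal in X (for every x ∈ X there exists z ∈ ker T with ‖x − z‖ = dist(x, ker T)), then T attains its norm: there exists x₀ with ‖x₀‖ ≤ 1 and ‖T x₀‖ = ‖T‖. -/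
/-!
The open mapping theorem, applied to `T` corestricted to its closed (hence complete) range,
gives `dist(x, ker T) ≤ C ‖T x‖`. Hence `dist(x, ker T) ≤ ‖x₁‖ + C ‖T x - T x₁‖` for every `x₁`,
and letting `T x₁` with `‖x₁‖ ≤ 1` tend to `T x` shows `dist(x, ker T) ≤ 1` whenever `T x` lies in
the closure of `T(B_X)`. The closed range contains the quasi-norm-attaining point `u = T x`, and a
nearest point `z` of the kernel gives `x - z ∈ B_X` with `T (x - z) = u`.
-/

open Metric Set

namespace ContinuousLinearMap

variable {𝕜 E F : Type*} [NontriviallyNormedField 𝕜]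
  [NormedAddCommGroup E] [NormedSpace 𝕜 E] [NormedAddCommGroup F] [NormedSpace 𝕜 F]

theorem exists_infDist_ker_le_of_isClosed_range [CompleteSpace E] [CompleteSpace F]
    (T : E →L[𝕜] F) (hT : IsClosed (range T)) :
    ∃ C, ∀ x, infDist x (LinearMap.ker (T : E →ₗ[𝕜] F) : Set E) ≤ C * ‖T x‖ := by
  have hT' : IsClosed (LinearMap.range (T : E →ₗ[𝕜] F) : Set F) := by
    rwa [LinearMap.coe_range, coe_coe]
  have := hT'.completeSpace_coe
  let T' : E →L[𝕜] LinearMap.range (T : E →ₗ[𝕜] F) :=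
    T.codRestrict _ (LinearMap.mem_range_self (T : E →ₗ[𝕜] F))
  obtain ⟨C, -, hpre⟩ := T'.exists_preimage_norm_le (by rintro ⟨_, x, rfl⟩; exact ⟨x, rfl⟩)
  refine ⟨C, fun x => ?_⟩
  obtain ⟨w, hw, hwC⟩ := hpre (T' x)
  have hker : x - w ∈ LinearMap.ker (T : E →ₗ[𝕜] F) := by
    have hTw : T w = T x := congrArg Subtype.val hw
    simp [hTw]
  calc infDist x (LinearMap.ker (T : E →ₗ[𝕜] F) : Set E) ≤ dist x (x - w) :=
        infDist_le_dist_of_mem hker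
    _ = ‖w‖ := by rw [dist_eq_norm, sub_sub_cancel]
    _ ≤ C * ‖T x‖ := hwC

theorem infDist_ker_le_of_mem_closure_image_closedBall {T : E →L[𝕜] F} {C r : ℝ}
    (hC : ∀ x, infDist x (LinearMap.ker (T : E →ₗ[𝕜] F) : Set E) ≤ C * ‖T x‖) {x : E}
    (hx : T x ∈ closure (T '' closedBall 0 r)) :
    infDist x (LinearMap.ker (T : E →ₗ[𝕜] F) : Set E) ≤ r := by
  set K : Set E := (LinearMap.ker (T : E →ₗ[𝕜] F) : Set E)
  have hclosed : IsClosed {y | infDist x K ≤ r + C * ‖T x - y‖} :=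
    isClosed_le continuous_const (by fun_prop)
  have himage : T '' closedBall 0 r ⊆ {y | infDist x K ≤ r + C * ‖T x - y‖} := by
    rintro _ ⟨x₁, hx₁, rfl⟩
    rw [mem_closedBall_zero_iff] at hx₁
    calc infDist x K ≤ infDist (x - x₁) K + dist x (x - x₁) := infDist_le_infDist_add_dist
      _ ≤ C * ‖T x - T x₁‖ + ‖x₁‖ := by
          rw [dist_eq_norm, sub_sub_cancel, ← map_sub]
          exact add_le_add_left (hC _) _
      _ ≤ r + C * ‖T x - T x₁‖ := by linarith
  simpa using closure_minimal himage hclosed hx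

end ContinuousLinearMap

/-- a quasi norm attaining operator with closed range and proximinal kernel
attains its norm. -/
theorem quasi_attains_closed_range_proximinal_kernel_implies_attains
    {𝕜 X Y : Type*} [RCLike 𝕜]
    [NormedAddCommGroup X] [NormedSpace 𝕜 X] [CompleteSpace X]
    [NormedAddCommGroup Y] [NormedSpace 𝕜 Y] [CompleteSpace Y]
    (T : X →L[𝕜] Y)
    (hQNA : ∃ u ∈ closure (⇑T '' Metric.closedBall 0 1), ‖u‖ = ‖T‖)
    (hrange : IsClosed (Set.range ⇑T))
    (hprox : ∀ x : X, ∃ z ∈ LinearMap.ker (T : X →ₗ[𝕜] Y),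
      ‖x - z‖ = Metric.infDist x (LinearMap.ker (T : X →ₗ[𝕜] Y) : Set X)) :
    ∃ x₀ : X, ‖x₀‖ ≤ 1 ∧ ‖T x₀‖ = ‖T‖ := by
  obtain ⟨u, hu, hnorm⟩ := hQNA
  obtain ⟨x, rfl⟩ : u ∈ range T := closure_minimal (image_subset_range _ _) hrange hu
  obtain ⟨C, hC⟩ := T.exists_infDist_ker_le_of_isClosed_range hrange
  obtain ⟨z, hz, hxz⟩ := hprox x
  refine ⟨x - z, ?_, ?_⟩
  · exact hxz ▸ ContinuousLinearMap.infDist_ker_le_of_mem_closure_image_closedBall hC hu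
  · rw [map_sub, show T z = 0 from hz, sub_zero, hnorm]
end

section
/- Let X and Y be Banach spaces over 𝕂 (= ℝ or ℂ) and let T : X → Y be a bounded linear operator that quasi attains its norm. If every continuous linear functional x* ∈ X* that vanishes on ker T attains its norm (i.e., the annihilator (ker T)^⊥ is contained in NA(X,𝕂)), then T attains its norm: there exists x₀ with ‖x₀‖ = 1 and ‖T x₀‖ = ‖T‖. -/
/-! Pick `u` in the closure of `T(B_X)` with `‖u‖ = ‖T‖` and, by Hahn–Banach, a functional `g` of
norm at most one with `g u = ‖u‖`. The functional `g ∘ T` vanishes on `ker T` and has norm `‖T‖`,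
since `|g|` is bounded by `‖g ∘ T‖` on `T(B_X)` and hence on its closure. So `g ∘ T` attains its
norm at some unit vector `x₀`, and `‖T‖ = |g (T x₀)| ≤ ‖T x₀‖`. -/

open Metric Set

namespace ContinuousLinearMap

variable {𝕜 X Y : Type*} [RCLike 𝕜] [NormedAddCommGroup X] [NormedSpace 𝕜 X]
  [NormedAddCommGroup Y] [NormedSpace 𝕜 Y]

theorem closure_image_closedBall_subset (S : X →L[𝕜] Y) :
    closure (S '' closedBall 0 1) ⊆ closedBall 0 ‖S‖ :=
  closure_minimal
    (image_subset_iff.mpr fun x hx =>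
      mem_closedBall_zero_iff.mpr (S.unit_le_opNorm x (mem_closedBall_zero_iff.mp hx)))
    isClosed_closedBall

theorem norm_apply_le_opNorm_comp_of_mem_closure_image_closedBall (T : X →L[𝕜] Y)
    (g : StrongDual 𝕜 Y) {u : Y} (hu : u ∈ closure (T '' closedBall 0 1)) :
    ‖g u‖ ≤ ‖g.comp T‖ := by
  have hgu := image_closure_subset_closure_image g.continuous (mem_image_of_mem g hu)
  rw [image_image] at hgu
  simpa using (g.comp T).closure_image_closedBall_subset hgu

end ContinuousLinearMap

theorem quasi_attains_annihilator_norm_attaining_implies_attains_general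
    {𝕜 X Y : Type*} [RCLike 𝕜]
    [NormedAddCommGroup X] [NormedSpace 𝕜 X]
    [NormedAddCommGroup Y] [NormedSpace 𝕜 Y]
    (T : X →L[𝕜] Y)
    (hQNA : ∃ u ∈ closure (⇑T '' Metric.closedBall 0 1), ‖u‖ = ‖T‖)
    (hann : ∀ f : X →L[𝕜] 𝕜, (∀ z ∈ LinearMap.ker (T : X →ₗ[𝕜] Y), f z = 0) →
      ∃ x : X, ‖x‖ = 1 ∧ ‖f x‖ = ‖f‖) :
    ∃ x₀ : X, ‖x₀‖ = 1 ∧ ‖T x₀‖ = ‖T‖ := by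
  obtain ⟨u, hu, hu_norm⟩ := hQNA
  obtain ⟨g, hg, hgu⟩ := exists_dual_vector'' 𝕜 u
  have hker : ∀ z ∈ LinearMap.ker (T : X →ₗ[𝕜] Y), g.comp T z = 0 := fun z hz => by
    rw [ContinuousLinearMap.comp_apply, show T z = 0 from hz, map_zero]
  obtain ⟨x₀, hx₀, hgTx₀⟩ := hann (g.comp T) hker
  refine ⟨x₀, hx₀, le_antisymm (by simpa [hx₀] using T.le_opNorm x₀) ?_⟩
  calc ‖T‖ = ‖g u‖ := by rw [hgu, RCLike.norm_ofReal, abs_norm, hu_norm]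
    _ ≤ ‖g.comp T‖ := T.norm_apply_le_opNorm_comp_of_mem_closure_image_closedBall g hu
    _ = ‖g (T x₀)‖ := hgTx₀.symm
    _ ≤ ‖g‖ * ‖T x₀‖ := g.le_opNorm _
    _ ≤ ‖T x₀‖ := mul_le_of_le_one_left (norm_nonneg _) hg

/-- if `T` quasi attains its norm and every continuous linear functional vanishing
on `ker T` attains its norm (i.e. `(ker T)^⊥ ⊆ NA(X,𝕜)`), then `T` attains its norm. -/
theorem quasi_attains_annihilator_norm_attaining_implies_attains
    {𝕜 X Y : Type*} [RCLike 𝕜]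
    [NormedAddCommGroup X] [NormedSpace 𝕜 X] [CompleteSpace X]
    [NormedAddCommGroup Y] [NormedSpace 𝕜 Y] [CompleteSpace Y]
    (T : X →L[𝕜] Y)
    (hQNA : ∃ u ∈ closure (⇑T '' Metric.closedBall 0 1), ‖u‖ = ‖T‖)
    (hann : ∀ f : X →L[𝕜] 𝕜, (∀ z ∈ LinearMap.ker (T : X →ₗ[𝕜] Y), f z = 0) →
      ∃ x : X, ‖x‖ = 1 ∧ ‖f x‖ = ‖f‖) :
    ∃ x₀ : X, ‖x₀‖ = 1 ∧ ‖T x₀‖ = ‖T‖ :=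
  quasi_attains_annihilator_norm_attaining_implies_attains_general T hQNA hann
end
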